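/- Let D¹ and D² be two generalized derivations of an n-Hom-Lie algebra (g,[·,…,·]_g,α). Suppose there exists x ∈ g with α(x) = x and D¹ = D² + ad_x, where ad_x(y₁,…,y_{n−1}) = [x,y₁,…,y_{n−1}]_g. Then the generalized derivation extensions (g⊕KD¹, [·,…,·]_{D¹}, α_{D¹}) and (g⊕KD², [·,…,·]_{D²}, α_{D²}) are isomorphic as n-Hom-Lie algebras; explicitly, the linear map θ(y + kD¹) = y + kx + kD² is an isomorphism of n-Hom-Lie algebras from (g⊕KD¹, [·,…,·]_{D¹}, α_{D¹}) to (g⊕KD², [·,…,·]_{D²}, α_{D²}), i.e. θ is a linear isomorphism with θ([z₁,…,zₙ]_{D¹}) = [θ(z₁),…,θ(zₙ)]_{D²} and θ∘α_{D¹} = α_{D²}∘θ. -/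

import Mathlib

open Function Finset

/-- An alternating multilinear map `(Fin n → W) → U` (as a property of a raw function). -/
def IsAltML (K : Type*) {W U : Type*} [Field K] [AddCommGroup W] [Module K W]
    [AddCommGroup U] [Module K U] (n : ℕ) (f : (Fin n → W) → U) : Prop :=
  (∀ (x : Fin n → W) (i : Fin n) (a b : W),
      f (Function.update x i (a + b)) =
        f (Function.update x i a) + f (Function.update x i b)) ∧
  (∀ (x : Fin n → W) (i : Fin n) (c : K) (a : W),
      f (Function.update x i (c • a)) = c • f (Function.update x i a)) ∧
  (∀ (x : Fin n → W) (i j : Fin n), i ≠ j → x i = x j → f x = 0)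

/-- An `n`-Hom-Lie algebra structure (`n = m + 2`): an alternating multilinear `n`-ary
bracket and a linear automorphism `α` that is multiplicative for the bracket, such that the
Hom-Fundamental identity holds. -/
def IsNHomLie (K : Type*) {g : Type*} [Field K] [AddCommGroup g] [Module K g]
    (m : ℕ) (br : (Fin (m + 2) → g) → g) (α : g ≃ₗ[K] g) : Prop :=
  IsAltML K (m + 2) br ∧
  (∀ x : Fin (m + 2) → g, α (br x) = br (fun i => α (x i))) ∧
  (∀ (x : Fin (m + 1) → g) (y : Fin (m + 2) → g),
    br (Fin.snoc (fun i => α (x i)) (br y)) =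
      ∑ i : Fin (m + 2),
        br (Function.update (fun j => α (y j)) i (br (Fin.snoc x (y i)))))

/-- A generalized derivation of the `n`-Hom-Lie algebra `(g, br, α)`: an alternating
multilinear map `D : g^{n−1} → g` satisfying conditions (i)–(iv). -/
def IsGenDerivation {K g : Type*} [Field K] [AddCommGroup g] [Module K g] (m : ℕ)
    (br : (Fin (m + 2) → g) → g) (α : g ≃ₗ[K] g)
    (D : (Fin (m + 1) → g) → g) : Prop :=
  IsAltML K (m + 1) D ∧
  (∀ x : Fin (m + 1) → g, α (D x) = D (fun i => α (x i))) ∧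
  (∀ x y : Fin (m + 1) → g,
    br (Fin.snoc (fun i => α (x i)) (D y)) - br (Fin.snoc (fun i => α (y i)) (D x)) =
      ∑ i : Fin (m + 1),
        D (Function.update (fun j => α (y j)) i (br (Fin.snoc x (y i))))) ∧
  (∀ (x : Fin m → g) (y : Fin (m + 2) → g),
    D (Fin.snoc (fun i => α (x i)) (br y)) =
      ∑ i : Fin (m + 2),
        br (Function.update (fun j => α (y j)) i (D (Fin.snoc x (y i))))) ∧
  (∀ (x : Fin m → g) (y : Fin (m + 1) → g),
    D (Fin.snoc (fun i => α (x i)) (D y)) =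
      ∑ i : Fin (m + 1),
        D (Function.update (fun j => α (y j)) i (D (Fin.snoc x (y i)))))

/-- The bracket of the generalized derivation extension on `g ⊕ K·D` (here `g × K`):
`[x₁+k₁D,…,xₙ+kₙD]_D = [x₁,…,xₙ]_g + Σᵢ (−1)^{i−1} kᵢ D(x₁,…,x̂ᵢ,…,xₙ)`. -/
def extBracket {K g : Type*} [Field K] [AddCommGroup g] [Module K g] (m : ℕ)
    (br : (Fin (m + 2) → g) → g) (D : (Fin (m + 1) → g) → g) :
    (Fin (m + 2) → g × K) → g × K :=
  fun z =>
    (br (fun i => (z i).1) +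
        ∑ i : Fin (m + 2),
          ((-1 : K) ^ (i : ℕ)) • (z i).2 • D (fun j => (z (i.succAbove j)).1),
      0)


open Function Finset

section Aux

variable {K g : Type*} [Field K] [AddCommGroup g] [Module K g]

/-- Bundle an `IsAltML` raw function as an `AlternatingMap`. -/
def IsAltML.toAlt {n : ℕ} {F : (Fin n → g) → g} (hF : IsAltML K n F) :
    AlternatingMap K g g (Fin n) where
  toFun := F
  map_update_add' := @fun dec v i a b => by
    rw [Subsingleton.elim dec (by clear dec; infer_instance)]
    exact hF.1 v i a b
  map_update_smul' := @fun dec v i c a => by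
    rw [Subsingleton.elim dec (by clear dec; infer_instance)]
    exact hF.2.1 v i c a
  map_eq_zero_of_eq' := fun v i j heq hne => hF.2.2 v i j hne heq

@[simp] lemma IsAltML.toAlt_apply {n : ℕ} {F : (Fin n → g) → g} (hF : IsAltML K n F)
    (v : Fin n → g) : hF.toAlt v = F v := rfl

/-- Moving an entry to the front of an alternating map costs a sign `(-1)^p`. -/
lemma alt_cons_succAbove {n : ℕ} (G : AlternatingMap K g g (Fin (n + 1)))
    (v : Fin (n + 1) → g) (p : Fin (n + 1)) (a : g) :
    G (Fin.cons a (v ∘ p.succAbove)) = ((-1 : K) ^ (p : ℕ)) • G (Function.update v p a) := by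
  have hfun : Fin.cons a (v ∘ p.succAbove) =
      (Function.update v p a) ∘ (p.cycleRange).symm := by
    funext l
    refine Fin.cases ?_ (fun j => ?_) l
    · rw [Fin.cons_zero, Function.comp_apply, Fin.cycleRange_symm_zero,
        Function.update_self]
    · rw [Fin.cons_succ, Function.comp_apply, Function.comp_apply,
        Fin.cycleRange_symm_succ, Function.update_of_ne (Fin.succAbove_ne p j)]
  have hperm : G ((Function.update v p a) ∘ ⇑(p.cycleRange⁻¹)) =
      Equiv.Perm.sign (p.cycleRange⁻¹) • G (Function.update v p a) :=
    G.map_perm _ _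
  rw [hfun]
  have : ⇑(p.cycleRange).symm = ⇑(p.cycleRange⁻¹) := rfl
  rw [this, hperm, Equiv.Perm.sign_inv, Fin.sign_cycleRange]
  rcases Nat.even_or_odd (p : ℕ) with h | h
  · rw [h.neg_one_pow, h.neg_one_pow, one_smul, one_smul]
  · rw [h.neg_one_pow, h.neg_one_pow, neg_one_smul]
    exact (Units.neg_smul 1 (G (Function.update v p a))).trans (by rw [one_smul])

end Aux

section Aux2

variable {K g : Type*} [Field K] [AddCommGroup g] [Module K g]

/-- Expansion of an alternating map at a rank-one perturbation, restricted to a finset. -/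
lemma alt_expand_aux {n : ℕ} (G : AlternatingMap K g g (Fin n)) (k : Fin n → K) (x : g)
    (t : Finset (Fin n)) :
    ∀ v : Fin n → g,
      G (fun i => v i + if i ∈ t then k i • x else 0) =
        G v + ∑ i ∈ t, k i • G (Function.update v i x) := by
  classical
  induction t using Finset.induction_on with
  | empty => simp
  | @insert a t ha ih =>
    intro v
    have h1 : (fun i => v i + if i ∈ insert a t then k i • x else 0) =
        Function.update (fun i => v i + if i ∈ t then k i • x else 0) a
          (v a + k a • x) := by
      funext i
      by_cases h : i = a
      · subst h; simp [ha]
      · rw [Function.update_of_ne h]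
        simp [Finset.mem_insert, h]
    have h2 : Function.update (fun i => v i + if i ∈ t then k i • x else 0) a x =
        fun i => (Function.update v a x) i + if i ∈ t then k i • x else 0 := by
      funext i
      by_cases h : i = a
      · subst h; simp [ha]
      · rw [Function.update_of_ne h, Function.update_of_ne h]
    have h3 : Function.update (fun i => v i + if i ∈ t then k i • x else 0) a (v a) =
        fun i => v i + if i ∈ t then k i • x else 0 := by
      nth_rewrite 1 [show v a = v a + (if a ∈ t then k a • x else 0) by simp [ha]]
      exact Function.update_eq_self a _
    rw [h1, G.map_update_add, G.map_update_smul, h3, h2, ih v,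
      ih (Function.update v a x), Finset.sum_insert ha]
    have h4 : ∑ i ∈ t, k i • G (Function.update (Function.update v a x) i x) = 0 := by
      refine Finset.sum_eq_zero fun i hi => ?_
      have hne : a ≠ i := fun h => ha (h ▸ hi)
      rw [G.map_eq_zero_of_eq _ (i := a) (j := i) ?_ hne, smul_zero]
      rw [Function.update_of_ne hne, Function.update_self, Function.update_self]
    rw [h4, add_zero]
    abel

lemma alt_expand {n : ℕ} (G : AlternatingMap K g g (Fin n)) (v : Fin n → g)
    (k : Fin n → K) (x : g) :
    G (fun i => v i + k i • x) = G v + ∑ i : Fin n, k i • G (Function.update v i x) := by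
  have := alt_expand_aux G k x Finset.univ v
  simpa using this

end Aux2

section Aux3

variable {K g : Type*} [Field K] [AddCommGroup g] [Module K g]

lemma succAbove_val {n : ℕ} (i : Fin (n + 1)) (j : Fin n) :
    ((i.succAbove j : Fin (n + 1)) : ℕ) =
      if (j : ℕ) < (i : ℕ) then (j : ℕ) else (j : ℕ) + 1 := by
  rw [Fin.succAbove]
  split_ifs with h h' h' <;> simp_all [Fin.lt_def]

/-- The sign-reversing involution on pairs of indices. -/
def swapIdx {m : ℕ} (p : Fin (m + 2) × Fin (m + 1)) : Fin (m + 2) × Fin (m + 1) :=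
  if h : (p.1 : ℕ) ≤ (p.2 : ℕ) then
    (p.2.succ, ⟨(p.1 : ℕ), by have := p.2.isLt; omega⟩)
  else
    (⟨(p.2 : ℕ), by have := p.2.isLt; omega⟩, ⟨(p.1 : ℕ) - 1, by have := p.1.isLt; omega⟩)

lemma swapIdx_of_le {m i j : ℕ} (hi : i < m + 2) (hj : j < m + 1) (h : i ≤ j) :
    swapIdx (⟨i, hi⟩, ⟨j, hj⟩) = (⟨j + 1, by omega⟩, ⟨i, by omega⟩) := by
  unfold swapIdx
  rw [dif_pos h]
  refine Prod.ext ?_ rfl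
  apply Fin.ext
  simp

lemma swapIdx_of_gt {m i j : ℕ} (hi : i < m + 2) (hj : j < m + 1) (h : j < i) :
    swapIdx (⟨i, hi⟩, ⟨j, hj⟩) = (⟨j, by omega⟩, ⟨i - 1, by omega⟩) := by
  unfold swapIdx
  rw [dif_neg (by simpa using h)]

lemma swapIdx_involutive {m : ℕ} (p : Fin (m + 2) × Fin (m + 1)) :
    swapIdx (swapIdx p) = p := by
  obtain ⟨⟨i, hi⟩, ⟨j, hj⟩⟩ := p
  rcases le_or_gt i j with h | h
  · rw [swapIdx_of_le hi hj h, swapIdx_of_gt _ _ (by omega)]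
    refine Prod.ext (Fin.ext rfl) (Fin.ext ?_)
    simp
  · rw [swapIdx_of_gt hi hj h, swapIdx_of_le _ _ (by omega)]
    refine Prod.ext (Fin.ext ?_) (Fin.ext rfl)
    simp
    omega

lemma swapIdx_ne {m : ℕ} (p : Fin (m + 2) × Fin (m + 1)) : swapIdx p ≠ p := by
  obtain ⟨⟨i, hi⟩, ⟨j, hj⟩⟩ := p
  rcases le_or_gt i j with h | h
  · rw [swapIdx_of_le hi hj h]
    intro hcon
    have := congrArg (fun q => ((q.1 : Fin (m + 2)) : ℕ)) hcon
    simp at this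
    omega
  · rw [swapIdx_of_gt hi hj h]
    intro hcon
    have := congrArg (fun q => ((q.1 : Fin (m + 2)) : ℕ)) hcon
    simp at this
    omega

lemma swapIdx_succAbove_fst {m : ℕ} (p : Fin (m + 2) × Fin (m + 1)) :
    p.1.succAbove p.2 = (swapIdx p).1 := by
  obtain ⟨⟨i, hi⟩, ⟨j, hj⟩⟩ := p
  rcases le_or_gt i j with h | h
  · rw [swapIdx_of_le hi hj h]
    apply Fin.ext
    rw [succAbove_val]
    simp only []
    split_ifs <;> simp <;> omega
  · rw [swapIdx_of_gt hi hj h]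
    apply Fin.ext
    rw [succAbove_val]
    simp only []
    split_ifs <;> simp <;> omega

lemma swapIdx_succAbove_back {m : ℕ} (p : Fin (m + 2) × Fin (m + 1)) :
    (swapIdx p).1.succAbove (swapIdx p).2 = p.1 := by
  have h := swapIdx_succAbove_fst (swapIdx p)
  rw [swapIdx_involutive] at h
  exact h

lemma swapIdx_comp {m : ℕ} (p : Fin (m + 2) × Fin (m + 1)) (t : Fin m) :
    (swapIdx p).1.succAbove ((swapIdx p).2.succAbove t) =
      p.1.succAbove (p.2.succAbove t) := by
  obtain ⟨⟨i, hi⟩, ⟨j, hj⟩⟩ := p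
  rcases le_or_gt i j with h | h
  · rw [swapIdx_of_le hi hj h]
    apply Fin.ext
    simp only [succAbove_val]
    split_ifs <;> omega
  · rw [swapIdx_of_gt hi hj h]
    apply Fin.ext
    simp only [succAbove_val]
    split_ifs <;> omega

lemma swapIdx_sign {m : ℕ} (K : Type*) [Field K] (p : Fin (m + 2) × Fin (m + 1)) :
    ((-1 : K) ^ (((swapIdx p).1 : ℕ) + ((swapIdx p).2 : ℕ))) =
      -((-1 : K) ^ ((p.1 : ℕ) + (p.2 : ℕ))) := by
  obtain ⟨⟨i, hi⟩, ⟨j, hj⟩⟩ := p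
  rcases le_or_gt i j with h | h
  · rw [swapIdx_of_le hi hj h]
    simp only []
    rw [show (j + 1) + i = (i + j) + 1 by omega, pow_succ]
    ring
  · rw [swapIdx_of_gt hi hj h]
    simp only []
    rw [show i + j = (j + (i - 1)) + 1 by omega, pow_succ]
    ring

end Aux3

section Aux4

variable {K g : Type*} [Field K] [AddCommGroup g] [Module K g]

lemma alt_update_eq_cons {m : ℕ} (G : AlternatingMap K g g (Fin (m + 1)))
    (v : Fin (m + 1) → g) (j : Fin (m + 1)) (x : g) :
    G (Function.update v j x) = ((-1 : K) ^ (j : ℕ)) • G (Fin.cons x (v ∘ j.succAbove)) := by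
  rw [alt_cons_succAbove G v j x, smul_smul, ← pow_add,
    Even.neg_one_pow ⟨(j : ℕ), rfl⟩, one_smul]

lemma alt_double_sum_zero {m : ℕ} (G : AlternatingMap K g g (Fin (m + 1)))
    (y : Fin (m + 2) → g) (k : Fin (m + 2) → K) (x : g) :
    ∑ i : Fin (m + 2), ((-1 : K) ^ (i : ℕ)) • k i •
      ∑ j : Fin (m + 1), k (i.succAbove j) • G (Function.update (y ∘ i.succAbove) j x)
      = 0 := by
  have step : ∑ i : Fin (m + 2), ((-1 : K) ^ (i : ℕ)) • k i •
      ∑ j : Fin (m + 1), k (i.succAbove j) • G (Function.update (y ∘ i.succAbove) j x) =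
      ∑ p : Fin (m + 2) × Fin (m + 1),
        (((-1 : K) ^ ((p.1 : ℕ) + (p.2 : ℕ))) * (k p.1 * k (p.1.succAbove p.2))) •
          G (Fin.cons x (fun t => y (p.1.succAbove (p.2.succAbove t)))) := by
    rw [Fintype.sum_prod_type]
    refine Finset.sum_congr rfl fun i _ => ?_
    rw [Finset.smul_sum, Finset.smul_sum]
    refine Finset.sum_congr rfl fun j _ => ?_
    rw [alt_update_eq_cons G (y ∘ i.succAbove) j x, smul_smul, smul_smul, smul_smul]
    have harg : (Fin.cons x ((y ∘ i.succAbove) ∘ j.succAbove) : Fin (m + 1) → g) =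
        Fin.cons x (fun t => y (i.succAbove (j.succAbove t))) := rfl
    rw [harg]
    congr 1
    rw [pow_add]
    ring
  rw [step]
  refine Finset.sum_ninvolution swapIdx ?_ ?_ (fun _ => Finset.mem_univ _)
    swapIdx_involutive
  · intro p
    have hvec : (Fin.cons x (fun t => y ((swapIdx p).1.succAbove ((swapIdx p).2.succAbove t)))
        : Fin (m + 1) → g) =
        Fin.cons x (fun t => y (p.1.succAbove (p.2.succAbove t))) := by
      funext t
      refine Fin.cases ?_ (fun s => ?_) t
      · rfl
      · rw [Fin.cons_succ, Fin.cons_succ, swapIdx_comp]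
    rw [hvec, swapIdx_sign K p, swapIdx_succAbove_back, ← swapIdx_succAbove_fst, ← add_smul]
    rw [show ((-1 : K) ^ ((p.1 : ℕ) + (p.2 : ℕ))) * (k p.1 * k (p.1.succAbove p.2)) +
      -((-1 : K) ^ ((p.1 : ℕ) + (p.2 : ℕ))) * (k (p.1.succAbove p.2) * k p.1) = 0 by ring,
      zero_smul]
  · exact fun p _ => swapIdx_ne p

end Aux4

/-- if `D¹ = D² + ad_x` for some `x` with `α(x) = x`, then
`θ(y + kD¹) = y + kx + kD²` is an isomorphism of `n`-Hom-Lie algebras from the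
generalized derivation extension by `D¹` to the one by `D²`. -/
theorem extension_isomorphism {K g : Type*} [Field K] [CharZero K]
    [AddCommGroup g] [Module K g] (m : ℕ) (br : (Fin (m + 2) → g) → g) (α : g ≃ₗ[K] g)
    (hg : IsNHomLie K m br α) (D1 D2 : (Fin (m + 1) → g) → g)
    (hD1 : IsGenDerivation m br α D1) (hD2 : IsGenDerivation m br α D2)
    (x : g) (hx : α x = x)
    (hrel : ∀ y : Fin (m + 1) → g, D1 y = D2 y + br (Fin.cons x y)) :
    Function.Bijective (fun w : g × K => ((w.1 + w.2 • x, w.2) : g × K)) ∧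
    (∀ w w' : g × K,
      ((w + w').1 + (w + w').2 • x, (w + w').2) =
        ((w.1 + w.2 • x, w.2) : g × K) + (w'.1 + w'.2 • x, w'.2)) ∧
    (∀ (c : K) (w : g × K),
      ((c • w).1 + (c • w).2 • x, (c • w).2) = c • ((w.1 + w.2 • x, w.2) : g × K)) ∧
    (∀ z : Fin (m + 2) → g × K,
      ((extBracket m br D1 z).1 + (extBracket m br D1 z).2 • x,
          (extBracket m br D1 z).2) =
        extBracket m br D2 (fun i => ((z i).1 + (z i).2 • x, (z i).2))) ∧
    (∀ w : g × K,
      (((α.prodCongr (LinearEquiv.refl K K)) w).1 + ((α.prodCongr (LinearEquiv.refl K K)) w).2 • x,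
          ((α.prodCongr (LinearEquiv.refl K K)) w).2) =
        (α.prodCongr (LinearEquiv.refl K K)) (w.1 + w.2 • x, w.2)) := by
  classical
  refine ⟨⟨?_, ?_⟩, ?_, ?_, ?_, ?_⟩
  · -- injective
    intro a b h
    rw [Prod.mk.injEq] at h
    obtain ⟨h1, h2⟩ := h
    rw [h2] at h1
    have : a.1 = b.1 := by
      have := add_right_cancel h1
      exact this
    exact Prod.ext this h2
  · -- surjective
    intro w
    exact ⟨(w.1 - w.2 • x, w.2), by simp⟩
  · -- additive
    intro w w'
    rw [Prod.mk.injEq]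
    refine ⟨?_, rfl⟩
    simp only [Prod.fst_add, Prod.snd_add, add_smul]
    abel
  · -- homogeneous
    intro c w
    simp only [Prod.smul_fst, Prod.smul_snd, Prod.smul_mk, smul_add, smul_eq_mul, mul_smul]
  · -- bracket
    intro z
    set y : Fin (m + 2) → g := fun i => (z i).1 with hy
    set k : Fin (m + 2) → K := fun i => (z i).2 with hk
    unfold extBracket
    dsimp only
    rw [Prod.mk.injEq]
    refine ⟨?_, rfl⟩
    have hexp_br : br (fun i => y i + k i • x) =
        br y + ∑ i : Fin (m + 2), k i • br (Function.update y i x) :=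
      alt_expand hg.1.toAlt y k x
    have hexpD : ∀ i : Fin (m + 2),
        D2 (fun j => y (i.succAbove j) + k (i.succAbove j) • x) =
          D2 (fun j => y (i.succAbove j)) +
            ∑ j : Fin (m + 1), k (i.succAbove j) •
              D2 (Function.update (fun j => y (i.succAbove j)) j x) :=
      fun i => alt_expand hD2.1.toAlt (y ∘ i.succAbove) (k ∘ i.succAbove) x
    have hmove : ∀ i : Fin (m + 2),
        br (Fin.cons x (fun j => y (i.succAbove j))) =
          ((-1 : K) ^ (i : ℕ)) • br (Function.update y i x) :=
      fun i => alt_cons_succAbove hg.1.toAlt y i x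
    have hsq : ∀ i : Fin (m + 2), ((-1 : K) ^ (i : ℕ)) * ((-1 : K) ^ (i : ℕ)) = 1 :=
      fun i => by rw [← pow_add]; exact Even.neg_one_pow ⟨(i : ℕ), rfl⟩
    have hL : ∑ i : Fin (m + 2), ((-1 : K) ^ (i : ℕ)) • k i •
          D1 (fun j => y (i.succAbove j)) =
        (∑ i : Fin (m + 2), ((-1 : K) ^ (i : ℕ)) • k i •
          D2 (fun j => y (i.succAbove j))) +
          ∑ i : Fin (m + 2), k i • br (Function.update y i x) := by
      rw [← Finset.sum_add_distrib]
      refine Finset.sum_congr rfl fun i _ => ?_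
      rw [hrel (fun j => y (i.succAbove j)), smul_add, smul_add, hmove i,
        smul_smul, smul_smul, smul_smul,
        show ((-1 : K) ^ (i : ℕ) * k i * (-1 : K) ^ (i : ℕ)) = k i from by
          linear_combination k i * hsq i]
    have hR : ∑ i : Fin (m + 2), ((-1 : K) ^ (i : ℕ)) • k i •
          D2 (fun j => y (i.succAbove j) + k (i.succAbove j) • x) =
        (∑ i : Fin (m + 2), ((-1 : K) ^ (i : ℕ)) • k i •
          D2 (fun j => y (i.succAbove j))) +
          ∑ i : Fin (m + 2), ((-1 : K) ^ (i : ℕ)) • k i •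
            ∑ j : Fin (m + 1), k (i.succAbove j) •
              D2 (Function.update (fun j => y (i.succAbove j)) j x) := by
      rw [← Finset.sum_add_distrib]
      refine Finset.sum_congr rfl fun i _ => ?_
      rw [hexpD i, smul_add, smul_add]
    have hzero : ∑ i : Fin (m + 2), ((-1 : K) ^ (i : ℕ)) • k i •
        ∑ j : Fin (m + 1), k (i.succAbove j) •
          D2 (Function.update (fun j => y (i.succAbove j)) j x) = 0 :=
      alt_double_sum_zero hD2.1.toAlt y k x
    rw [zero_smul, add_zero, hexp_br, hL, hR, hzero, add_zero]
    abel
  · -- alpha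
    intro w
    simp only [LinearEquiv.prodCongr_apply, LinearEquiv.refl_apply, Prod.mk.injEq]
    refine ⟨?_, trivial⟩
    rw [map_add, map_smul, hx]
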